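/- The two-dimensional Romik map 𝓡 on [0,1]×[0,1], defined by 𝓡(x,y) = (x/(1-2x), y/(1+2y)) for x ∈ [0,1/3), 𝓡(x,y) = (1/x - 2, 1/(y+2)) for x ∈ [1/3,1/2), and 𝓡(x,y) = (2 - 1/x, 1/(2-y)) for x ∈ [1/2,1], preserves the measure with density 1/(x+y-2xy)² with respect to two-dimensional Lebesgue measure: for every Borel set D ⊆ [0,1]², the integral of 1/(x+y-2xy)² over D equals the integral over 𝓡(D). -/

import Mathlib

/-!
On each of the strips `x < 1/3`, `1/3 ≤ x < 1/2`, `1/2 ≤ x` the map is a product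
`(x, y) ↦ (m x, m' y)` of Möbius maps `m x = (a x + b) / (c x + d)`, `m' y = (a' y + b') / (c' y + d')`
of determinant `±1`. Its Jacobian is `1 / ((c x + d) (c' y + d'))²`, while the form
`B(x, y) = x + y - 2 x y` satisfies `B(m x, m' y) = B(x, y) / ((c x + d) (c' y + d'))`, so the change of
variables formula leaves the density `1 / B²` unchanged on each strip. The images of the strips lie in
`y ≤ 1/3`, `1/3 ≤ y ≤ 1/2` and `1/2 ≤ y`, hence overlap only in null sets, and the three equalities add up.
-/

open MeasureTheory

noncomputable def romikExt (p : ℝ × ℝ) : ℝ × ℝ :=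
  if p.1 < 1/3 then (p.1 / (1 - 2*p.1), p.2 / (1 + 2*p.2))
  else if p.1 < 1/2 then (1/p.1 - 2, 1/(p.2 + 2))
  else (2 - 1/p.1, 1/(2 - p.2))

open Set ENNReal

noncomputable def mobius (a b c d x : ℝ) : ℝ := (a * x + b) / (c * x + d)

theorem hasDerivAt_mobius {a b c d x : ℝ} (h : c * x + d ≠ 0) :
    HasDerivAt (mobius a b c d) ((a * d - b * c) / (c * x + d) ^ 2) x := by
  refine ((((hasDerivAt_id x).const_mul a).add_const b).div
    (((hasDerivAt_id x).const_mul c).add_const d) h).congr_deriv ?_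
  simp only [id]
  ring

theorem injOn_mobius {a b c d : ℝ} (h : a * d - b * c ≠ 0) :
    InjOn (mobius a b c d) {x | c * x + d ≠ 0} := by
  intro x hx y hy hxy
  rw [mobius, mobius, div_eq_div_iff hx hy] at hxy
  have : (a * d - b * c) * (x - y) = 0 := by linear_combination hxy
  simpa [h, sub_eq_zero] using this

section ProdMap

variable {f g : ℝ → ℝ} {f' g' : ℝ × ℝ → ℝ} {s : Set (ℝ × ℝ)}

theorem measurableSet_image_prodMap (hs : MeasurableSet s)
    (hf : ∀ p ∈ s, HasDerivAt f (f' p) p.1) (hg : ∀ p ∈ s, HasDerivAt g (g' p) p.2)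
    (hinj : InjOn (Prod.map f g) s) : MeasurableSet (Prod.map f g '' s) :=
  measurable_image_of_fderivWithin hs
    (fun p hp ↦ ((hf p hp).hasFDerivAt.prodMap p (hg p hp).hasFDerivAt).hasFDerivWithinAt) hinj

theorem lintegral_image_prodMap (hs : MeasurableSet s)
    (hf : ∀ p ∈ s, HasDerivAt f (f' p) p.1) (hg : ∀ p ∈ s, HasDerivAt g (g' p) p.2)
    (hinj : InjOn (Prod.map f g) s) (φ : ℝ × ℝ → ℝ≥0∞) :
    ∫⁻ p in Prod.map f g '' s, φ p =
      ∫⁻ p in s, ENNReal.ofReal |f' p * g' p| * φ (Prod.map f g p) := by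
  rw [lintegral_image_eq_lintegral_abs_det_fderiv_mul volume hs
    (fun p hp ↦ ((hf p hp).hasFDerivAt.prodMap p (hg p hp).hasFDerivAt).hasFDerivWithinAt) hinj]
  simp [ContinuousLinearMap.det, LinearMap.det_prodMap]

end ProdMap

section PreservesMeasureOn

variable {α : Type*} [MeasurableSpace α]

def PreservesMeasureOn (μ : Measure α) (F : α → α) (s : Set α) : Prop :=
  MeasurableSet (F '' s) ∧ μ (F '' s) = μ s

variable {μ : Measure α} {F G : α → α} {s T : Set α}

theorem PreservesMeasureOn.congr (hFG : EqOn F G s) (hG : PreservesMeasureOn μ G s) :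
    PreservesMeasureOn μ F s := by
  rwa [PreservesMeasureOn, hFG.image_eq]

theorem PreservesMeasureOn.of_inter_of_diff (hT : MeasurableSet T)
    (h₁ : PreservesMeasureOn μ F (s ∩ T)) (h₂ : PreservesMeasureOn μ F (s \ T))
    (hF : AEDisjoint μ (F '' (s ∩ T)) (F '' (s \ T))) : PreservesMeasureOn μ F s := by
  have himage : F '' s = F '' (s ∩ T) ∪ F '' (s \ T) := by
    rw [← image_union, inter_union_sdiff]
  refine ⟨himage ▸ h₁.1.union h₂.1, ?_⟩
  rw [himage, measure_union₀ h₂.1.nullMeasurableSet hF, h₁.2, h₂.2, measure_inter_add_sdiff _ hT]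

end PreservesMeasureOn

theorem volume_preimage_snd_singleton (c : ℝ) : volume (Prod.snd ⁻¹' {c} : Set (ℝ × ℝ)) = 0 := by
  rw [← univ_prod, Measure.volume_eq_prod, Measure.prod_prod, Real.volume_singleton, mul_zero]

theorem aedisjoint_image_of_snd_le {μ : Measure (ℝ × ℝ)} (hμ : μ ≪ volume) {F : ℝ × ℝ → ℝ × ℝ}
    {s t : Set (ℝ × ℝ)} (c : ℝ) (hs : ∀ p ∈ s, (F p).2 ≤ c) (ht : ∀ p ∈ t, c ≤ (F p).2) :
    AEDisjoint μ (F '' s) (F '' t) := by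
  refine hμ (measure_mono_null ?_ (volume_preimage_snd_singleton c))
  rintro _ ⟨⟨p, hp, rfl⟩, ⟨q, hq, hpq⟩⟩
  exact le_antisymm (hs p hp) (hpq ▸ ht q hq)

noncomputable def romikDensity (p : ℝ × ℝ) : ℝ≥0∞ :=
  ENNReal.ofReal (1 / (p.1 + p.2 - 2 * p.1 * p.2) ^ 2)

noncomputable def romikMeasure : Measure (ℝ × ℝ) := volume.withDensity romikDensity

section MobiusPair

variable {a b c d a' b' c' d' : ℝ}

theorem ofReal_mul_romikDensity_mobius (hdet : |a * d - b * c| = 1)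
    (hdet' : |a' * d' - b' * c'| = 1)
    (hB : ∀ x y : ℝ, (a * x + b) * (c' * y + d') + (c * x + d) * (a' * y + b')
      - 2 * (a * x + b) * (a' * y + b') = x + y - 2 * x * y)
    {p : ℝ × ℝ} (hx : c * p.1 + d ≠ 0) (hy : c' * p.2 + d' ≠ 0) :
    ENNReal.ofReal |(a * d - b * c) / (c * p.1 + d) ^ 2 * ((a' * d' - b' * c') / (c' * p.2 + d') ^ 2)|
      * romikDensity (Prod.map (mobius a b c d) (mobius a' b' c' d') p) = romikDensity p := by
  have hjac : |(a * d - b * c) / (c * p.1 + d) ^ 2 * ((a' * d' - b' * c') / (c' * p.2 + d') ^ 2)|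
      = 1 / ((c * p.1 + d) * (c' * p.2 + d')) ^ 2 := by
    rw [abs_mul, abs_div, abs_div, hdet, hdet', abs_sq, abs_sq, mul_pow, one_div_mul_one_div]
  have hform : mobius a b c d p.1 + mobius a' b' c' d' p.2
      - 2 * mobius a b c d p.1 * mobius a' b' c' d' p.2
      = (p.1 + p.2 - 2 * p.1 * p.2) / ((c * p.1 + d) * (c' * p.2 + d')) := by
    have e₁ : mobius a b c d p.1 * (c * p.1 + d) = a * p.1 + b := div_mul_cancel₀ _ hx
    have e₂ : mobius a' b' c' d' p.2 * (c' * p.2 + d') = a' * p.2 + b' := div_mul_cancel₀ _ hy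
    rw [← hB p.1 p.2, eq_div_iff (mul_ne_zero hx hy)]
    linear_combination (c' * p.2 + d' - 2 * mobius a' b' c' d' p.2 * (c' * p.2 + d')) * e₁
      + (c * p.1 + d - 2 * (a * p.1 + b)) * e₂
  rw [romikDensity, romikDensity, Prod.map_fst, Prod.map_snd, ← ofReal_mul (abs_nonneg _), hjac,
    hform]
  rcases eq_or_ne (p.1 + p.2 - 2 * p.1 * p.2) 0 with h | h
  · simp [h]
  · field_simp

theorem preservesMeasureOn_romikMeasure_mobius (hdet : |a * d - b * c| = 1)
    (hdet' : |a' * d' - b' * c'| = 1)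
    (hB : ∀ x y : ℝ, (a * x + b) * (c' * y + d') + (c * x + d) * (a' * y + b')
      - 2 * (a * x + b) * (a' * y + b') = x + y - 2 * x * y)
    {t : Set (ℝ × ℝ)} (ht : MeasurableSet t)
    (hden : ∀ p ∈ t, c * p.1 + d ≠ 0 ∧ c' * p.2 + d' ≠ 0) :
    PreservesMeasureOn romikMeasure (Prod.map (mobius a b c d) (mobius a' b' c' d')) t := by
  have hf (p : ℝ × ℝ) (hp : p ∈ t) :
      HasDerivAt (mobius a b c d) ((a * d - b * c) / (c * p.1 + d) ^ 2) p.1 :=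
    hasDerivAt_mobius (hden p hp).1
  have hg (p : ℝ × ℝ) (hp : p ∈ t) :
      HasDerivAt (mobius a' b' c' d') ((a' * d' - b' * c') / (c' * p.2 + d') ^ 2) p.2 :=
    hasDerivAt_mobius (hden p hp).2
  have hinj : InjOn (Prod.map (mobius a b c d) (mobius a' b' c' d')) t :=
    ((injOn_mobius (abs_ne_zero.1 (hdet ▸ one_ne_zero))).prodMap
      (injOn_mobius (abs_ne_zero.1 (hdet' ▸ one_ne_zero)))).mono hden
  refine ⟨measurableSet_image_prodMap ht hf hg hinj, ?_⟩
  rw [romikMeasure, withDensity_apply', withDensity_apply', lintegral_image_prodMap ht hf hg hinj]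
  exact setLIntegral_congr_fun ht fun p hp ↦
    ofReal_mul_romikDensity_mobius hdet hdet' hB (hden p hp).1 (hden p hp).2

end MobiusPair

section Branches

variable {p : ℝ × ℝ} {t : Set (ℝ × ℝ)}

theorem romikExt_of_fst_lt_third (h : p.1 < 1/3) :
    romikExt p = Prod.map (mobius 1 0 (-2) 1) (mobius 1 0 2 1) p := by
  rw [romikExt, if_pos h, Prod.map, mobius, mobius, Prod.mk.injEq]
  constructor <;> ring

theorem romikExt_of_fst_mem_Ico (h₁ : 1/3 ≤ p.1) (h₂ : p.1 < 1/2) :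
    romikExt p = Prod.map (mobius (-2) 1 1 0) (mobius 0 1 1 2) p := by
  have : p.1 ≠ 0 := by linarith
  rw [romikExt, if_neg h₁.not_gt, if_pos h₂, Prod.map, mobius, mobius, Prod.mk.injEq]
  constructor
  · field_simp
    ring
  · ring

theorem romikExt_of_half_le_fst (h : 1/2 ≤ p.1) :
    romikExt p = Prod.map (mobius 2 (-1) 1 0) (mobius 0 1 (-1) 2) p := by
  have : p.1 ≠ 0 := by linarith
  rw [romikExt, if_neg (by linarith), if_neg h.not_gt, Prod.map, mobius, mobius, Prod.mk.injEq]
  constructor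
  · field_simp
    ring
  · ring

theorem preservesMeasureOn_romikExt_of_fst_lt_third (ht : MeasurableSet t)
    (hts : ∀ p ∈ t, p.1 < 1/3 ∧ 0 ≤ p.2) : PreservesMeasureOn romikMeasure romikExt t := by
  refine .congr (fun p hp ↦ romikExt_of_fst_lt_third (hts p hp).1) ?_
  refine preservesMeasureOn_romikMeasure_mobius (by norm_num) (by norm_num) (fun x y ↦ by ring) ht
    fun p hp ↦ ⟨?_, ?_⟩ <;> linarith [hts p hp]

theorem preservesMeasureOn_romikExt_of_fst_mem_Ico (ht : MeasurableSet t)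
    (hts : ∀ p ∈ t, 1/3 ≤ p.1 ∧ p.1 < 1/2 ∧ 0 ≤ p.2) :
    PreservesMeasureOn romikMeasure romikExt t := by
  refine .congr (fun p hp ↦ romikExt_of_fst_mem_Ico (hts p hp).1 (hts p hp).2.1) ?_
  refine preservesMeasureOn_romikMeasure_mobius (by norm_num) (by norm_num) (fun x y ↦ by ring) ht
    fun p hp ↦ ⟨?_, ?_⟩ <;> linarith [hts p hp]

theorem preservesMeasureOn_romikExt_of_half_le_fst (ht : MeasurableSet t)
    (hts : ∀ p ∈ t, 1/2 ≤ p.1 ∧ p.2 ≤ 1) : PreservesMeasureOn romikMeasure romikExt t := by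
  refine .congr (fun p hp ↦ romikExt_of_half_le_fst (hts p hp).1) ?_
  refine preservesMeasureOn_romikMeasure_mobius (by norm_num) (by norm_num) (fun x y ↦ by ring) ht
    fun p hp ↦ ⟨?_, ?_⟩ <;> linarith [hts p hp]

theorem romikExt_snd_le_third (hx : p.1 < 1/3) (hy : p.2 ∈ Icc 0 1) : (romikExt p).2 ≤ 1/3 := by
  rw [romikExt, if_pos hx, div_le_iff₀ (by linarith [hy.1])]
  linarith [hy.2]

theorem third_le_romikExt_snd (hx : 1/3 ≤ p.1) (hy : p.2 ∈ Icc 0 1) : 1/3 ≤ (romikExt p).2 := by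
  rw [romikExt, if_neg hx.not_gt]
  split_ifs
  · rw [le_div_iff₀ (by linarith [hy.1])]
    linarith [hy.2]
  · rw [le_div_iff₀ (by linarith [hy.2])]
    linarith [hy.1]

theorem romikExt_snd_le_half (hx₁ : 1/3 ≤ p.1) (hx₂ : p.1 < 1/2) (hy : 0 ≤ p.2) :
    (romikExt p).2 ≤ 1/2 := by
  rw [romikExt, if_neg hx₁.not_gt, if_pos hx₂, div_le_iff₀ (by linarith)]
  linarith

theorem half_le_romikExt_snd (hx : 1/2 ≤ p.1) (hy : p.2 ∈ Icc 0 1) : 1/2 ≤ (romikExt p).2 := by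
  rw [romikExt, if_neg (by linarith), if_neg hx.not_gt, le_div_iff₀ (by linarith [hy.2])]
  linarith [hy.1]

end Branches

theorem romikExt_preserves_density (D : Set (ℝ × ℝ)) (hD : MeasurableSet D)
    (hsub : D ⊆ Set.Icc (0 : ℝ) 1 ×ˢ Set.Icc (0 : ℝ) 1) :
    ∫⁻ p in D, ENNReal.ofReal (1 / (p.1 + p.2 - 2*p.1*p.2)^2) ∂volume =
    ∫⁻ p in romikExt '' D, ENNReal.ofReal (1 / (p.1 + p.2 - 2*p.1*p.2)^2) ∂volume := by
  have hy (p : ℝ × ℝ) (hp : p ∈ D) : p.2 ∈ Icc (0 : ℝ) 1 := (hsub hp).2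
  have hT₀ : MeasurableSet {p : ℝ × ℝ | p.1 < 1/3} := measurableSet_lt measurable_fst measurable_const
  have hT₁ : MeasurableSet {p : ℝ × ℝ | p.1 < 1/2} := measurableSet_lt measurable_fst measurable_const
  have hac : romikMeasure ≪ volume := withDensity_absolutelyContinuous _ _
  have h₀ := preservesMeasureOn_romikExt_of_fst_lt_third (hD.inter hT₀)
    fun p hp ↦ ⟨hp.2, (hy p hp.1).1⟩
  have h₁ := preservesMeasureOn_romikExt_of_fst_mem_Ico ((hD.diff hT₀).inter hT₁)
    fun p hp ↦ ⟨not_lt.1 hp.1.2, hp.2, (hy p hp.1.1).1⟩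
  have h₂ := preservesMeasureOn_romikExt_of_half_le_fst ((hD.diff hT₀).diff hT₁)
    fun p hp ↦ ⟨not_lt.1 hp.2, (hy p hp.1.1).2⟩
  have h₁₂ := h₁.of_inter_of_diff hT₁ h₂ <| aedisjoint_image_of_snd_le hac (1/2)
    (fun p hp ↦ romikExt_snd_le_half (not_lt.1 hp.1.2) hp.2 (hy p hp.1.1).1)
    (fun p hp ↦ half_le_romikExt_snd (not_lt.1 hp.2) (hy p hp.1.1))
  have h := h₀.of_inter_of_diff hT₀ h₁₂ <| aedisjoint_image_of_snd_le hac (1/3)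
    (fun p hp ↦ romikExt_snd_le_third hp.2 (hy p hp.1))
    (fun p hp ↦ third_le_romikExt_snd (not_lt.1 hp.2) (hy p hp.1))
  rw [← withDensity_apply', ← withDensity_apply']
  exact h.2.symm
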